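/- If a and b are twin vertices in a graph G (Γ(a) = Γ(b), in particular a and b are non-adjacent), and a vertex x not equal to a or b is eliminated, then in the elimination graph G_x the vertices a and b are either twins or indistinguishable (the latter occurring exactly when x was a common neighbor of a and b). -/

import Mathlib

open SimpleGraph

attribute [local instance] Classical.propDecidable

variable {V : Type*} [Fintype V] [DecidableEq V]

/-- The elimination graph `G_x`: delete `x` and complete its neighborhood to a clique.
(The eliminated vertex is kept as an isolated vertex.) -/
def elimG (G : SimpleGraph V) (x : V) : SimpleGraph V where
  Adj u v := u ≠ v ∧ u ≠ x ∧ v ≠ x ∧ (G.Adj u v ∨ (G.Adj x u ∧ G.Adj x v))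
  symm := by
    constructor
    intro u v h
    obtain ⟨h1, h2, h3, h4⟩ := h
    refine ⟨h1.symm, h3, h2, ?_⟩
    rcases h4 with h | ⟨h4, h5⟩
    · exact Or.inl h.symm
    · exact Or.inr ⟨h5, h4⟩
  loopless := by constructor; intro v h; exact h.1 rfl

/-- The deficiency `D(x)`: the set of unordered pairs of distinct, non-adjacent
neighbors of `x`. -/
noncomputable def deficiencyFinset (G : SimpleGraph V) (x : V) : Finset (Sym2 V) :=
  ((Finset.univ ×ˢ Finset.univ : Finset (V × V)).filter
    (fun p => p.1 ≠ p.2 ∧ G.Adj x p.1 ∧ G.Adj x p.2 ∧ ¬ G.Adj p.1 p.2)).image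
    (fun p => s(p.1, p.2))

/-- Successive elimination of a list of vertices. -/
def elimList : SimpleGraph V → List V → SimpleGraph V
  | G, [] => G
  | G, x :: xs => elimList (elimG G x) xs

/-- The fill-in of an elimination ordering given as a list: the total number of
edges added during the elimination process. -/
noncomputable def fillList : SimpleGraph V → List V → ℕ
  | _, [] => 0
  | G, x :: xs => (deficiencyFinset G x).card + fillList (elimG G x) xs

/-- The set of fill edges added during the elimination process. -/
noncomputable def fillEdges : SimpleGraph V → List V → Finset (Sym2 V)
  | _, [] => ∅
  | G, x :: xs => deficiencyFinset G x ∪ fillEdges (elimG G x) xs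

/-- A list is an (elimination) ordering if it enumerates every vertex exactly once. -/
def IsOrdering (L : List V) : Prop := L.Nodup ∧ ∀ v : V, v ∈ L

/-- The minimum fill-in `Φ(G)`. -/
noncomputable def minFillIn (G : SimpleGraph V) : ℕ :=
  sInf {n | ∃ L : List V, IsOrdering L ∧ fillList G L = n}

/-- A vertex is simplicial if its neighborhood is a clique. -/
def IsSimplicial (G : SimpleGraph V) (x : V) : Prop :=
  ∀ a b, G.Adj x a → G.Adj x b → a ≠ b → G.Adj a b

/-- `a` and `b` are indistinguishable: equal closed neighborhoods. -/
def Indistinguishable (G : SimpleGraph V) (a b : V) : Prop :=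
  a ≠ b ∧ insert a (G.neighborSet a) = insert b (G.neighborSet b)

/-- `a` and `b` are twins: equal open neighborhoods (hence non-adjacent). -/
def Twins (G : SimpleGraph V) (a b : V) : Prop :=
  a ≠ b ∧ G.neighborSet a = G.neighborSet b

/-- Chordality: no induced cycle of length at least 4, equivalently every cycle of
length at least 4 has a chord. -/
def IsChordal (G : SimpleGraph V) : Prop :=
  ∀ n : ℕ, 4 ≤ n → ∀ f : ZMod n → V, Function.Injective f →
    ¬ (∀ i j : ZMod n, G.Adj (f i) (f j) ↔ (j = i + 1 ∨ i = j + 1))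

/-- `T` is a triangulation of `G`: a set of non-edges whose addition makes `G` chordal. -/
def IsTriangulation (G : SimpleGraph V) (T : Finset (Sym2 V)) : Prop :=
  (∀ e ∈ T, ¬ e.IsDiag ∧ e ∉ G.edgeSet) ∧
    IsChordal (G ⊔ SimpleGraph.fromEdgeSet (↑T : Set (Sym2 V)))

/-- A minimum triangulation. -/
def IsMinTriangulation (G : SimpleGraph V) (T : Finset (Sym2 V)) : Prop :=
  IsTriangulation G T ∧ ∀ T' : Finset (Sym2 V), IsTriangulation G T' → T.card ≤ T'.card

/-- The graph obtained from `G` by deleting the vertices in `S`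
(deleted vertices are kept as isolated vertices). -/
def deleteSet (G : SimpleGraph V) (S : Set V) : SimpleGraph V where
  Adj u v := G.Adj u v ∧ u ∉ S ∧ v ∉ S
  symm := ⟨fun _ _ ⟨h, hu, hv⟩ => ⟨h.symm, hv, hu⟩⟩
  loopless := ⟨fun v h => G.irrefl h.1⟩

section

omit [Fintype V] [DecidableEq V]

variable {G : SimpleGraph V} {a b x : V}

theorem elimG_adj {u v : V} :
    (elimG G x).Adj u v ↔ u ≠ v ∧ u ≠ x ∧ v ≠ x ∧ (G.Adj u v ∨ (G.Adj x u ∧ G.Adj x v)) :=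
  Iff.rfl

theorem twins_of_forall_adj_iff (hab : a ≠ b) (hnadj : ¬ G.Adj a b)
    (hadj : ∀ v, v ≠ a → v ≠ b → (G.Adj a v ↔ G.Adj b v)) : Twins G a b := by
  refine ⟨hab, Set.ext fun v => ?_⟩
  simp only [mem_neighborSet]
  by_cases hva : v = a
  · subst hva
    simpa [G.adj_comm] using hnadj
  by_cases hvb : v = b
  · subst hvb
    simpa using hnadj
  exact hadj v hva hvb

theorem indistinguishable_of_forall_adj_iff (hab : a ≠ b) (hadj_ab : G.Adj a b)
    (hadj : ∀ v, v ≠ a → v ≠ b → (G.Adj a v ↔ G.Adj b v)) : Indistinguishable G a b := by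
  refine ⟨hab, Set.ext fun v => ?_⟩
  simp only [Set.mem_insert_iff, mem_neighborSet]
  by_cases hva : v = a
  · subst hva
    simp [hadj_ab.symm]
  by_cases hvb : v = b
  · subst hvb
    simp [hadj_ab]
  simpa [hva, hvb] using hadj v hva hvb

namespace Twins

theorem adj_iff (h : Twins G a b) (v : V) : G.Adj a v ↔ G.Adj b v :=
  Set.ext_iff.mp h.2 v

theorem not_adj (h : Twins G a b) : ¬ G.Adj a b := fun hab =>
  G.irrefl ((h.adj_iff b).mp hab)

theorem elimG_adj_iff_of_ne (h : Twins G a b) (hxa : x ≠ a) (hxb : x ≠ b) {v : V}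
    (hva : v ≠ a) (hvb : v ≠ b) : (elimG G x).Adj a v ↔ (elimG G x).Adj b v := by
  have hx : G.Adj x a ↔ G.Adj x b := by
    rw [G.adj_comm x a, G.adj_comm x b]
    exact h.adj_iff x
  simp [elimG_adj, h.adj_iff v, hx, hva.symm, hvb.symm, hxa.symm, hxb.symm]

theorem elimG_adj_iff (h : Twins G a b) (hxa : x ≠ a) (hxb : x ≠ b) :
    (elimG G x).Adj a b ↔ G.Adj x a ∧ G.Adj x b := by
  simp [elimG_adj, h.1, h.not_adj, hxa.symm, hxb.symm]

end Twins

end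

/-- twins remain twins after eliminating any other vertex, unless that
vertex is a common neighbor, in which case they become indistinguishable. -/
theorem stmt_4 (G : SimpleGraph V) (a b x : V) (h : Twins G a b)
    (hxa : x ≠ a) (hxb : x ≠ b) :
    (G.Adj x a ∧ G.Adj x b → Indistinguishable (elimG G x) a b) ∧
    (¬ (G.Adj x a ∧ G.Adj x b) → Twins (elimG G x) a b) :=
  ⟨fun hcommon => indistinguishable_of_forall_adj_iff h.1
      ((h.elimG_adj_iff hxa hxb).mpr hcommon) fun _ => h.elimG_adj_iff_of_ne hxa hxb,
    fun hnot => twins_of_forall_adj_iff h.1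
      (mt (h.elimG_adj_iff hxa hxb).mp hnot) fun _ => h.elimG_adj_iff_of_ne hxa hxb⟩
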